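/- arXiv:math/0006026 — 4 statements merged into one kernel-verified Lean document; each statement's English description precedes it below -/
import Mathlib

section
/- If x and y satisfy dx/dt = -(t - y²)/(t y) and dy/dt = 2xy/t (with t ≠ 0, y ≠ 0), then y satisfies y'' = (1/y)(y')² - (1/t)y' + 2y²/t² - 2/t (the Painlevé III equation of type D̃₈). -/
/-!
Since `y' = 2xy/t` holds on an open set, `deriv y` agrees with `u ↦ 2 x(u) y(u) / u` near `t`,
so `y''` is the derivative of that quotient. Substituting `x'` and `y'` from the system and
eliminating `x` through `2x = t y'/y` leaves the right-hand side of Painlevé III (D̃₈).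
-/

open Filter Topology

theorem deriv_deriv_eq_of_hasDerivAt_of_isOpen {𝕜 F : Type*} [NontriviallyNormedField 𝕜]
    [NormedAddCommGroup F] [NormedSpace 𝕜 F] {f g : 𝕜 → F} {g' : F} {s : Set 𝕜} {t : 𝕜}
    (hs : IsOpen s) (ht : t ∈ s) (hf : ∀ u ∈ s, HasDerivAt f (g u) u)
    (hg : HasDerivAt g g' t) : deriv (deriv f) t = g' := by
  have hfg : deriv f =ᶠ[𝓝 t] g := by
    filter_upwards [hs.mem_nhds ht] with u hu
    exact (hf u hu).deriv
  rw [hfg.deriv_eq, hg.deriv]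

theorem quotient_rule_eq_painleveIII_D8_rhs {K : Type*} [Field K] (t a b : K) (ht : t ≠ 0)
    (hb : b ≠ 0) :
    ((2 * (-(t - b ^ 2) / (t * b)) * b + 2 * a * (2 * a * b / t)) * t - 2 * a * b * 1) / t ^ 2
      = (1 / b) * (2 * a * b / t) ^ 2 - (1 / t) * (2 * a * b / t) + 2 * b ^ 2 / t ^ 2 - 2 / t := by
  field_simp
  ring

/-- If `x' = -(t - y²)/(ty)` and `y' = 2xy/t` on an open set where `t ≠ 0` and `y ≠ 0`,
then `y` satisfies the Painlevé III equation of type D̃₈: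
`y'' = (1/y)(y')² - (1/t)y' + 2y²/t² - 2/t`. -/
theorem painleveIII_D8_of_system (x y : ℂ → ℂ) (s : Set ℂ) (hs : IsOpen s)
    (hdom : ∀ t ∈ s, t ≠ 0 ∧ y t ≠ 0)
    (hx : ∀ t ∈ s, HasDerivAt x (-(t - (y t) ^ 2) / (t * y t)) t)
    (hy : ∀ t ∈ s, HasDerivAt y (2 * x t * y t / t) t) :
    ∀ t ∈ s, deriv (deriv y) t =
      (1 / y t) * (deriv y t) ^ 2 - (1 / t) * deriv y t + 2 * (y t) ^ 2 / t ^ 2 - 2 / t := by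
  intro t ht
  obtain ⟨ht0, hy0⟩ := hdom t ht
  have hxy : HasDerivAt (fun u => 2 * x u * y u)
      (2 * (-(t - (y t) ^ 2) / (t * y t)) * y t + 2 * x t * (2 * x t * y t / t)) t :=
    ((hx t ht).const_mul 2).mul (hy t ht)
  rw [deriv_deriv_eq_of_hasDerivAt_of_isOpen hs ht hy (hxy.div (hasDerivAt_id t) ht0),
    (hy t ht).deriv]
  exact quotient_rule_eq_painleveIII_D8_rhs t (x t) (y t) ht0 hy0
end

section
/- With F₂(x,y,t) = t - t y + x y², f₂(x,y,t) = -t² + 3tx - 2t³y + txy - 2x²y + 7t³y² - 8t³y³ - 8t²xy³ + 3t³y⁴ + 18t²xy⁴ - 10t²xy⁵ - 10tx²y⁵ + 11tx²y⁶ - 4x³y⁷, and g₂(x,y,t) = -t + t²y⁴ - 2t²y⁵ + t²y⁶ + 2txy⁶ - 2txy⁷ + x²y⁸, the identity ∂/∂t(1/F₂) + ∂/∂x(f₂/(t F₂²)) + ∂/∂y(g₂/(t F₂²)) = 0 holds wherever t ≠ 0 and F₂ ≠ 0. -/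
/-- `F₂(x,y,t) = t - ty + xy²`. -/
def F2 (x y t : ℂ) : ℂ := t - t * y + x * y ^ 2

/-- The explicit polynomial `f₂`. -/
def f2 (x y t : ℂ) : ℂ :=
  -t ^ 2 + 3 * t * x - 2 * t ^ 3 * y + t * x * y - 2 * x ^ 2 * y + 7 * t ^ 3 * y ^ 2
    - 8 * t ^ 3 * y ^ 3 - 8 * t ^ 2 * x * y ^ 3 + 3 * t ^ 3 * y ^ 4 + 18 * t ^ 2 * x * y ^ 4
    - 10 * t ^ 2 * x * y ^ 5 - 10 * t * x ^ 2 * y ^ 5 + 11 * t * x ^ 2 * y ^ 6 - 4 * x ^ 3 * y ^ 7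

/-- The explicit polynomial `g₂`. -/
def g2 (x y t : ℂ) : ℂ :=
  -t + t ^ 2 * y ^ 4 - 2 * t ^ 2 * y ^ 5 + t ^ 2 * y ^ 6 + 2 * t * x * y ^ 6
    - 2 * t * x * y ^ 7 + x ^ 2 * y ^ 8

/-! Each of the three terms is differentiated by the quotient rule; after multiplying by
`t F₂³` the claim becomes the polynomial identity `divergence_numerator_eq_zero`. -/

theorem HasDerivAt.div_const_mul_sq {𝕜 : Type*} [NontriviallyNormedField 𝕜] {p F : 𝕜 → 𝕜}
    {p' F' x : 𝕜} (c : 𝕜) (hp : HasDerivAt p p' x) (hF : HasDerivAt F F' x) (hc : c ≠ 0)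
    (hFx : F x ≠ 0) :
    HasDerivAt (fun u => p u / (c * F u ^ 2)) ((p' * F x - 2 * p x * F') / (c * F x ^ 3)) x := by
  refine (hp.fun_div ((hF.fun_pow 2).const_mul c) (by positivity)).congr_deriv ?_
  field_simp
  ring

def df2dx (x y t : ℂ) : ℂ :=
  3 * t + t * y - 4 * x * y - 8 * t ^ 2 * y ^ 3 + 18 * t ^ 2 * y ^ 4 - 10 * t ^ 2 * y ^ 5
    - 20 * t * x * y ^ 5 + 22 * t * x * y ^ 6 - 12 * x ^ 2 * y ^ 7

def dg2dy (x y t : ℂ) : ℂ :=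
  4 * t ^ 2 * y ^ 3 - 10 * t ^ 2 * y ^ 4 + 6 * t ^ 2 * y ^ 5 + 12 * t * x * y ^ 5
    - 14 * t * x * y ^ 6 + 8 * x ^ 2 * y ^ 7

theorem hasDerivAt_F2_t (x y t : ℂ) : HasDerivAt (fun s => F2 x y s) (1 - y) t := by
  have h : DifferentiableAt ℂ (fun s => F2 x y s) t := by unfold F2; fun_prop
  exact h.hasDerivAt.congr_deriv (by simp (disch := fun_prop) [F2])

theorem hasDerivAt_F2_x (x y t : ℂ) : HasDerivAt (fun u => F2 u y t) (y ^ 2) x := by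
  have h : DifferentiableAt ℂ (fun u => F2 u y t) x := by unfold F2; fun_prop
  exact h.hasDerivAt.congr_deriv (by simp (disch := fun_prop) [F2])

theorem hasDerivAt_F2_y (x y t : ℂ) : HasDerivAt (fun v => F2 x v t) (2 * x * y - t) y := by
  have h : DifferentiableAt ℂ (fun v => F2 x v t) y := by unfold F2; fun_prop
  exact h.hasDerivAt.congr_deriv (by simp (disch := fun_prop) [F2]; ring)

theorem hasDerivAt_f2_x (x y t : ℂ) : HasDerivAt (fun u => f2 u y t) (df2dx x y t) x := by
  have h : DifferentiableAt ℂ (fun u => f2 u y t) x := by unfold f2; fun_prop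
  exact h.hasDerivAt.congr_deriv (by simp (disch := fun_prop) [f2, df2dx]; ring)

theorem hasDerivAt_g2_y (x y t : ℂ) : HasDerivAt (fun v => g2 x v t) (dg2dy x y t) y := by
  have h : DifferentiableAt ℂ (fun v => g2 x v t) y := by unfold g2; fun_prop
  exact h.hasDerivAt.congr_deriv (by simp (disch := fun_prop) [g2, dg2dy]; ring)

theorem divergence_numerator_eq_zero (x y t : ℂ) :
    -t * (1 - y) * F2 x y t + (df2dx x y t * F2 x y t - 2 * f2 x y t * y ^ 2)
      + (dg2dy x y t * F2 x y t - 2 * g2 x y t * (2 * x * y - t)) = 0 := by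
  simp only [F2, f2, g2, df2dx, dg2dy]
  ring

/-- The identity `∂/∂t(1/F₂) + ∂/∂x(f₂/(tF₂²)) + ∂/∂y(g₂/(tF₂²)) = 0`
holds wherever `t ≠ 0` and `F₂ ≠ 0`. -/
theorem fundamental_identity_D8 (x y t : ℂ) (ht : t ≠ 0) (hF : F2 x y t ≠ 0) :
    deriv (fun s => 1 / F2 x y s) t
      + deriv (fun u => f2 u y t / (t * (F2 u y t) ^ 2)) x
      + deriv (fun v => g2 x v t / (t * (F2 x v t) ^ 2)) y = 0 := by
  simp only [one_div]
  rw [((hasDerivAt_F2_t x y t).fun_inv hF).deriv,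
    ((hasDerivAt_f2_x x y t).div_const_mul_sq t (hasDerivAt_F2_x x y t) ht hF).deriv,
    ((hasDerivAt_g2_y x y t).div_const_mul_sq t (hasDerivAt_F2_y x y t) ht hF).deriv]
  field_simp
  linear_combination divergence_numerator_eq_zero x y t
end

section
/- The function H₁(x,y,t) = y² + x y⁴ + x/(t(1 + x y²)²) satisfies F₁² · ∂H₁/∂y = -f₁/(t F₁) and -F₁² · ∂H₁/∂x = -g₁/(t F₁), where F₁ = 1 + x y², f₁ = -2y(t - 2x² + 5txy² + 9tx²y⁴ + 7tx³y⁶ + 2tx⁴y⁸), and g₁ = 1 - xy² + ty⁴ + 3txy⁶ + 3tx²y⁸ + tx³y¹⁰. -/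
section

variable {𝕜 : Type*} [NontriviallyNormedField 𝕜] {x y t : 𝕜}

theorem hasDerivAt_H1_snd (ht : t ≠ 0) (hF : 1 + x * y ^ 2 ≠ 0) :
    HasDerivAt (fun v => v ^ 2 + x * v ^ 4 + x / (t * (1 + x * v ^ 2) ^ 2))
      (2 * y + 4 * x * y ^ 3 - 4 * x ^ 2 * y / (t * (1 + x * y ^ 2) ^ 3)) y := by
  have hF' : HasDerivAt (fun v => 1 + x * v ^ 2) (x * (2 * y)) y := by
    simpa using ((hasDerivAt_pow 2 y).const_mul x).const_add 1
  have hden : HasDerivAt (fun v => t * (1 + x * v ^ 2) ^ 2)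
      (t * (2 * (1 + x * y ^ 2) * (x * (2 * y)))) y := by
    simpa using (hF'.pow 2).const_mul t
  have hquot := (hasDerivAt_const y x).div hden (mul_ne_zero ht (pow_ne_zero 2 hF))
  refine (((hasDerivAt_pow 2 y).add ((hasDerivAt_pow 4 y).const_mul x)).add hquot).congr_deriv ?_
  field_simp
  ring

theorem hasDerivAt_H1_fst (ht : t ≠ 0) (hF : 1 + x * y ^ 2 ≠ 0) :
    HasDerivAt (fun u => y ^ 2 + u * y ^ 4 + u / (t * (1 + u * y ^ 2) ^ 2))
      (y ^ 4 + (1 - x * y ^ 2) / (t * (1 + x * y ^ 2) ^ 3)) x := by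
  have hF' : HasDerivAt (fun u => 1 + u * y ^ 2) (y ^ 2) x := by
    simpa using ((hasDerivAt_id' x).mul_const (y ^ 2)).const_add 1
  have hden : HasDerivAt (fun u => t * (1 + u * y ^ 2) ^ 2)
      (t * (2 * (1 + x * y ^ 2) * y ^ 2)) x := by
    simpa using (hF'.pow 2).const_mul t
  have hquot := (hasDerivAt_id' x).div hden (mul_ne_zero ht (pow_ne_zero 2 hF))
  refine (((hasDerivAt_const x (y ^ 2)).add ((hasDerivAt_id' x).mul_const (y ^ 4))).add
    hquot).congr_deriv ?_
  field_simp
  ring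

end

/-- `H₁(x,y,t) = y² + xy⁴ + x/(t(1+xy²)²)` satisfies `F₁²·∂H₁/∂y = -f₁/(tF₁)` and
`-F₁²·∂H₁/∂x = -g₁/(tF₁)`, with `F₁ = 1 + xy²` and the explicit polynomials `f₁`, `g₁`. -/
theorem H1_twisted_hamiltonian (x y t : ℂ) (ht : t ≠ 0) (hF : 1 + x * y ^ 2 ≠ 0) :
    (1 + x * y ^ 2) ^ 2 * deriv (fun v => v ^ 2 + x * v ^ 4 + x / (t * (1 + x * v ^ 2) ^ 2)) y =
      -(-2 * y * (t - 2 * x ^ 2 + 5 * t * x * y ^ 2 + 9 * t * x ^ 2 * y ^ 4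
          + 7 * t * x ^ 3 * y ^ 6 + 2 * t * x ^ 4 * y ^ 8)) / (t * (1 + x * y ^ 2)) ∧
    -((1 + x * y ^ 2) ^ 2 *
        deriv (fun u => y ^ 2 + u * y ^ 4 + u / (t * (1 + u * y ^ 2) ^ 2)) x) =
      -(1 - x * y ^ 2 + t * y ^ 4 + 3 * t * x * y ^ 6 + 3 * t * x ^ 2 * y ^ 8
          + t * x ^ 3 * y ^ 10) / (t * (1 + x * y ^ 2)) := by
  rw [(hasDerivAt_H1_snd ht hF).deriv, (hasDerivAt_H1_fst ht hF).deriv]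
  constructor <;> field_simp <;> ring
end

section
/- Define vector fields θ₀ = [-y₀ + x₀² + t/2]∂/∂x₀ - [2x₀y₀ + α + 1/2]∂/∂y₀ in the (x₀,y₀)-chart and θ₁ = (1/2)[-2 - tx₁² - x₁³ - 2αx₁³ - 2x₁⁴y₁]∂/∂x₁ + (1/4)[(1 + 2α + 4x₁y₁)(t + x₁(1 + 2α + 2x₁y₁))]∂/∂y₁ in the (x₁,y₁)-chart. Then θ₀ and θ₁ correspond to the same vector field under the coordinate change x₁ = 1/x₀, y₁ = x₀(-(α+1/2) - x₀y₀). -/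
/-! The Jacobian of `(x₀, y₀) ↦ (1/x₀, x₀(-(α+1/2) - x₀y₀))` is
`[[-1/x₀², 0], [-(α+1/2) - 2x₀y₀, -x₀²]]`; applying it to `θ₀` and substituting the chart change
into `θ₁` leaves two identities of rational functions in `x₀`, which hold once `x₀ ≠ 0` is cleared. -/

section

variable {𝕜 : Type*} [NontriviallyNormedField 𝕜]

theorem hasDerivAt_mul_sub_mul_self (c y x : 𝕜) :
    HasDerivAt (fun u => u * (c - u * y)) (c - 2 * x * y) x :=
  ((hasDerivAt_id' x).mul (((hasDerivAt_id' x).mul_const y).const_sub c)).congr_deriv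
    (by ring)

theorem hasDerivAt_const_mul_sub_mul (a c y : 𝕜) :
    HasDerivAt (fun v => a * (c - a * v)) (-a ^ 2) y :=
  ((((hasDerivAt_id' y).const_mul a).const_sub c).const_mul a).congr_deriv (by ring)

end

/-- The vector fields
`θ₀ = (-y₀+x₀²+t/2)∂/∂x₀ - (2x₀y₀+α+1/2)∂/∂y₀` and
`θ₁ = (1/2)(-2-tx₁²-x₁³-2αx₁³-2x₁⁴y₁)∂/∂x₁ + (1/4)(1+2α+4x₁y₁)(t+x₁(1+2α+2x₁y₁))∂/∂y₁`
correspond to the same vector field under `x₁ = 1/x₀`, `y₁ = x₀(-(α+1/2) - x₀y₀)`: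
the pushforward of `θ₀` by the Jacobian of the coordinate change equals `θ₁` evaluated
at the image point. -/
theorem vector_fields_agree_PII (α t x₀ y₀ : ℂ) (hx : x₀ ≠ 0) :
    (deriv (fun u => 1 / u) x₀ * (-y₀ + x₀ ^ 2 + t / 2)
        + deriv (fun _ : ℂ => (1 : ℂ) / x₀) y₀ * (-(2 * x₀ * y₀ + α + 1 / 2))
      = (1 / 2) * (-2 - t * (1 / x₀) ^ 2 - (1 / x₀) ^ 3 - 2 * α * (1 / x₀) ^ 3
          - 2 * (1 / x₀) ^ 4 * (x₀ * (-(α + 1 / 2) - x₀ * y₀)))) ∧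
    (deriv (fun u => u * (-(α + 1 / 2) - u * y₀)) x₀ * (-y₀ + x₀ ^ 2 + t / 2)
        + deriv (fun v => x₀ * (-(α + 1 / 2) - x₀ * v)) y₀ * (-(2 * x₀ * y₀ + α + 1 / 2))
      = (1 / 4) * ((1 + 2 * α + 4 * (1 / x₀) * (x₀ * (-(α + 1 / 2) - x₀ * y₀)))
          * (t + (1 / x₀) * (1 + 2 * α
              + 2 * (1 / x₀) * (x₀ * (-(α + 1 / 2) - x₀ * y₀)))))) := by
  simp only [one_div, deriv_inv, deriv_const, (hasDerivAt_mul_sub_mul_self _ y₀ x₀).deriv,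
    (hasDerivAt_const_mul_sub_mul x₀ _ y₀).deriv]
  constructor <;> field_simp <;> ring
end
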